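/- arXiv:math/9810014 — 5 statements merged into one kernel-verified Lean document; each statement's English description precedes it below -/
import Mathlib

section
/- Let X be a finite set and L a complex matrix indexed by X whose principal minors det L_ξ (over all subsets ξ ⊆ X, with det L_∅ = 1) are all real and nonnegative, and assume 1+L is invertible. Then the weights Prob{ξ} = det L_ξ / det(1+L) define a probability distribution on the set of subsets of X, i.e., the weights are nonnegative and sum to 1. -/
open Matrix

lemma det_piecewise_one {X : Type*} [Fintype X] [DecidableEq X] (L : Matrix X X ℂ)
    (ξ : Finset X) :
    (Matrix.of (ξ.piecewise (fun i => L i) (fun i => (1 : Matrix X X ℂ) i))).det =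
      (L.submatrix (fun i : {x // x ∈ ξ} => (i : X)) (fun j : {x // x ∈ ξ} => (j : X))).det := by
  set M : Matrix X X ℂ :=
    Matrix.of (ξ.piecewise (fun i => L i) (fun i => (1 : Matrix X X ℂ) i)) with hM
  have e := Equiv.sumCompl (fun x => x ∈ ξ)
  rw [← Matrix.det_submatrix_equiv_self (Equiv.sumCompl (fun x => x ∈ ξ)) M]
  have hblock : M.submatrix (Equiv.sumCompl (fun x => x ∈ ξ)) (Equiv.sumCompl (fun x => x ∈ ξ)) =
      Matrix.fromBlocks
        (L.submatrix (fun i : {x // x ∈ ξ} => (i : X)) (fun j : {x // x ∈ ξ} => (j : X)))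
        (L.submatrix (fun i : {x // x ∈ ξ} => (i : X)) (fun j : {x // ¬ x ∈ ξ} => (j : X)))
        0 1 := by
    ext i j
    cases i with
    | inl i =>
      cases j with
      | inl j =>
        simp [M, Matrix.submatrix, Finset.piecewise_eq_of_mem _ _ _ i.2]
      | inr j =>
        simp [M, Matrix.submatrix, Finset.piecewise_eq_of_mem _ _ _ i.2]
    | inr i =>
      cases j with
      | inl j =>
        have hij : (i : X) ≠ (j : X) := fun h => i.2 (h ▸ j.2)
        simp [M, Matrix.submatrix, Finset.piecewise_eq_of_notMem _ _ _ i.2,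
          Matrix.one_apply, hij]
      | inr j =>
        have : ((i : X) = (j : X)) ↔ i = j := Subtype.coe_inj
        simp [M, Matrix.submatrix, Finset.piecewise_eq_of_notMem _ _ _ i.2,
          Matrix.one_apply, this]
  rw [hblock, Matrix.det_fromBlocks_zero₂₁, Matrix.det_one, mul_one]

lemma det_one_add_expand {X : Type*} [Fintype X] [DecidableEq X] (L : Matrix X X ℂ) :
    (1 + L).det = ∑ ξ : Finset X,
      (L.submatrix (fun i : {x // x ∈ ξ} => (i : X)) (fun j : {x // x ∈ ξ} => (j : X))).det := by
  have h := (Matrix.detRowAlternating :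
      (X → ℂ) [⋀^X]→ₗ[ℂ] ℂ).toMultilinearMap.map_add_univ
      (fun i => L i) (fun i => (1 : Matrix X X ℂ) i)
  have h1 : (1 + L).det = (Matrix.detRowAlternating :
      (X → ℂ) [⋀^X]→ₗ[ℂ] ℂ).toMultilinearMap
      ((fun i => L i) + (fun i => (1 : Matrix X X ℂ) i)) := by
    rw [add_comm]
    rfl
  rw [h1, h]
  exact Finset.sum_congr rfl fun ξ _ => det_piecewise_one L ξ

/-- If all principal minors of a complex matrix `L` on a finite set `X` are real and
nonnegative, and `1 + L` is invertible, then the weights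
`Prob{ξ} = det L_ξ / det (1+L)` define a probability distribution on the subsets of `X`:
each weight is (real and) nonnegative, and the weights sum to `1`. -/
theorem stmt_0 {X : Type*} [Fintype X] [DecidableEq X] (L : Matrix X X ℂ)
    (minor : Finset X → ℂ)
    (hminor : ∀ ξ : Finset X,
      minor ξ =
        (L.submatrix (fun i : {x // x ∈ ξ} => (i : X)) (fun j : {x // x ∈ ξ} => (j : X))).det)
    (hreal : ∀ ξ : Finset X, (minor ξ).im = 0)
    (hnonneg : ∀ ξ : Finset X, 0 ≤ (minor ξ).re)
    (hinv : IsUnit (1 + L).det) :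
    (∀ ξ : Finset X, (minor ξ / (1 + L).det).im = 0 ∧ 0 ≤ (minor ξ / (1 + L).det).re) ∧
      ∑ ξ : Finset X, minor ξ / (1 + L).det = 1 := by
  have hexp : (1 + L).det = ∑ ξ : Finset X, minor ξ := by
    rw [det_one_add_expand L]
    exact Finset.sum_congr rfl fun ξ _ => (hminor ξ).symm
  set d : ℂ := (1 + L).det with hd
  have hdim : d.im = 0 := by
    rw [hexp, Complex.im_sum]
    exact Finset.sum_eq_zero fun ξ _ => hreal ξ
  have hdre : 0 ≤ d.re := by
    rw [hexp, Complex.re_sum]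
    exact Finset.sum_nonneg fun ξ _ => hnonneg ξ
  have hdne : d ≠ 0 := hinv.ne_zero
  have hdeq : d = (d.re : ℂ) := (Complex.ext_iff).2 ⟨rfl, by simp [hdim]⟩
  have hdrepos : 0 < d.re := by
    rcases lt_or_eq_of_le hdre with h | h
    · exact h
    · exact absurd (by rw [hdeq, ← h]; simp) hdne
  refine ⟨fun ξ => ?_, ?_⟩
  · have hmeq : minor ξ = ((minor ξ).re : ℂ) :=
      (Complex.ext_iff).2 ⟨rfl, by simp [hreal ξ]⟩
    rw [hmeq, hdeq, ← Complex.ofReal_div]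
    constructor
    · simp
    · simpa using div_nonneg (hnonneg ξ) hdre
  · rw [← Finset.sum_div, ← hexp, div_self hdne]
end

section
/- Let L be a block matrix [[L₁₁, L₁₂],[L₂₁, L₂₂]] over ℂ that is J-Hermitian, i.e., L₁₁* = L₁₁, L₂₂* = L₂₂, L₁₂* = −L₂₁, and suppose L₁₁ and L₂₂ are positive definite. Then det L > 0. -/
open Matrix
open scoped ComplexOrder

/-- If the block matrix `L = [[L₁₁, L₁₂],[L₂₁, L₂₂]]` is J-Hermitian
(`L₁₁ᴴ = L₁₁`, `L₂₂ᴴ = L₂₂`, `L₁₂ᴴ = -L₂₁`) and the diagonal blocks `L₁₁, L₂₂` are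
positive definite, then `det L > 0` (in particular `det L` is real). -/
theorem stmt_3 {m n : Type*} [Fintype m] [DecidableEq m] [Fintype n] [DecidableEq n]
    (L₁₁ : Matrix m m ℂ) (L₁₂ : Matrix m n ℂ) (L₂₁ : Matrix n m ℂ) (L₂₂ : Matrix n n ℂ)
    (h11 : L₁₁.PosDef) (h22 : L₂₂.PosDef) (h12 : L₁₂ᴴ = -L₂₁) :
    ((Matrix.fromBlocks L₁₁ L₁₂ L₂₁ L₂₂).det).im = 0 ∧
      0 < ((Matrix.fromBlocks L₁₁ L₁₂ L₂₁ L₂₂).det).re := by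
  have hinv : Invertible L₁₁ := h11.isUnit.invertible
  have hC : L₂₁ = -L₁₂ᴴ := by rw [h12, neg_neg]
  have hSchur : (L₂₂ - L₂₁ * ⅟L₁₁ * L₁₂).PosDef := by
    have hps : (L₁₂ᴴ * L₁₁⁻¹ * L₁₂).PosSemidef := by
      have := h11.inv.posSemidef.conjTranspose_mul_mul_same L₁₂
      simpa [Matrix.mul_assoc] using this
    have heq : L₂₂ - L₂₁ * ⅟L₁₁ * L₁₂ = L₂₂ + L₁₂ᴴ * L₁₁⁻¹ * L₁₂ := by
      rw [hC, invOf_eq_nonsing_inv, sub_eq_add_neg, Matrix.neg_mul, Matrix.neg_mul, neg_neg]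
    rw [heq]
    exact h22.add_posSemidef hps
  have hdet : (fromBlocks L₁₁ L₁₂ L₂₁ L₂₂).det =
      L₁₁.det * (L₂₂ - L₂₁ * ⅟L₁₁ * L₁₂).det := det_fromBlocks₁₁ _ _ _ _
  have hmul : (0 : ℂ) < (fromBlocks L₁₁ L₁₂ L₂₁ L₂₂).det := by
    rw [hdet]; exact mul_pos h11.det_pos hSchur.det_pos
  rw [Complex.lt_def] at hmul
  exact ⟨by simpa using hmul.2.symm, by simpa using hmul.1⟩
end

section
/- Let L be a J-Hermitian block matrix (L₁₁* = L₁₁, L₂₂* = L₂₂, L₁₂* = −L₂₁) with L₁₁ ≥ 0 and L₂₂ ≥ 0 (positive semidefinite). Then every principal minor det L_ξ of L is real and nonnegative. -/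
open Matrix
open scoped ComplexOrder

/-!
For `A` positive definite, the Schur complement formula gives
`det (fromBlocks A B C D) = det A * det (D - C A⁻¹ B)`, and the sign condition `C = -Bᴴ` turns the
Schur complement into `D + Bᴴ A⁻¹ B`, which is positive semidefinite; so the determinant is a
product of two nonnegative reals. A positive semidefinite `A` is the limit of the positive definite
`A + ε • 1` as `ε → 0⁺`, and nonnegativity passes to the limit. Finally, a principal submatrix of a
J-Hermitian matrix is, up to a reordering of its index set, again J-Hermitian with positive
semidefinite diagonal blocks.
-/

namespace Matrix

section JHermitian

variable {𝕜 m n : Type*} [RCLike 𝕜] [Fintype m] [DecidableEq m] [Fintype n] [DecidableEq n]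
  {A : Matrix m m 𝕜} {B : Matrix m n 𝕜} {C : Matrix n m 𝕜} {D : Matrix n n 𝕜}

theorem det_fromBlocks_nonneg_of_posDef (hA : A.PosDef) (hD : D.PosSemidef) (hBC : Bᴴ = -C) :
    0 ≤ (fromBlocks A B C D).det := by
  let := hA.isUnit.invertible
  have hC : C = -Bᴴ := neg_eq_iff_eq_neg.mp hBC.symm
  have hschur : D - C * ⅟A * B = D + Bᴴ * A⁻¹ * B := by
    rw [hC, invOf_eq_nonsing_inv, Matrix.neg_mul, Matrix.neg_mul, sub_neg_eq_add]
  rw [det_fromBlocks₁₁, hschur]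
  exact mul_nonneg hA.posSemidef.det_nonneg
    (hD.add (hA.inv.posSemidef.conjTranspose_mul_mul_same B)).det_nonneg

theorem det_fromBlocks_nonneg (hA : A.PosSemidef) (hD : D.PosSemidef) (hBC : Bᴴ = -C) :
    0 ≤ (fromBlocks A B C D).det := by
  let f : ℝ → 𝕜 := fun ε => (fromBlocks (A + ε • 1) B C D).det
  have hf : Continuous f := by fun_prop
  have hf_pos : ∀ ε : ℝ, 0 < ε → 0 ≤ f ε := fun ε hε =>
    det_fromBlocks_nonneg_of_posDef (PosDef.posSemidef_add hA (PosDef.one.smul hε)) hD hBC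
  have hlim : Filter.Tendsto f (nhdsWithin 0 (Set.Ioi 0)) (nhds (fromBlocks A B C D).det) := by
    simpa [f] using (hf.tendsto 0).mono_left nhdsWithin_le_nhds
  exact ge_of_tendsto hlim (eventually_nhdsWithin_of_forall hf_pos)

end JHermitian

theorem conjTranspose_submatrix_eq_neg {α l m n o : Type*} [Star α] [Neg α] {B : Matrix m n α}
    {C : Matrix n m α} (h : Bᴴ = -C) (e : l → m) (f : o → n) :
    (B.submatrix e f)ᴴ = -(C.submatrix f e) := by
  rw [conjTranspose_submatrix, h]
  rfl

theorem submatrix_subtype_val_eq_fromBlocks {α m n : Type*} (L : Matrix (m ⊕ n) (m ⊕ n) α)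
    (p : m ⊕ n → Prop) :
    L.submatrix (Subtype.val : Subtype p → m ⊕ n) Subtype.val =
      (fromBlocks (L.toBlocks₁₁.submatrix Subtype.val Subtype.val)
        (L.toBlocks₁₂.submatrix Subtype.val Subtype.val)
        (L.toBlocks₂₁.submatrix Subtype.val Subtype.val)
        (L.toBlocks₂₂.submatrix Subtype.val Subtype.val)).submatrix
        (Equiv.subtypeSum (p := p)) (Equiv.subtypeSum (p := p)) := by
  ext ⟨i | i, hi⟩ ⟨j | j, hj⟩ <;> rfl

end Matrix

/-- Let `L` be a J-Hermitian matrix on `X = X₁ ⊔ X₂` (i.e. `L₁₁ᴴ = L₁₁`, `L₂₂ᴴ = L₂₂`,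
`L₁₂ᴴ = -L₂₁`) whose diagonal blocks are positive semidefinite. Then every principal
minor `det L_ξ` of `L` is real and nonnegative. -/
theorem stmt_4 {X₁ X₂ : Type*} [Fintype X₁] [DecidableEq X₁] [Fintype X₂] [DecidableEq X₂]
    (L : Matrix (X₁ ⊕ X₂) (X₁ ⊕ X₂) ℂ)
    (h11 : L.toBlocks₁₁.PosSemidef) (h22 : L.toBlocks₂₂.PosSemidef)
    (h12 : L.toBlocks₁₂ᴴ = -L.toBlocks₂₁) :
    ∀ ξ : Finset (X₁ ⊕ X₂),
      ((L.submatrix (fun i : {x // x ∈ ξ} => (i : X₁ ⊕ X₂))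
          (fun j : {x // x ∈ ξ} => (j : X₁ ⊕ X₂))).det).im = 0 ∧
        0 ≤ ((L.submatrix (fun i : {x // x ∈ ξ} => (i : X₁ ⊕ X₂))
          (fun j : {x // x ∈ ξ} => (j : X₁ ⊕ X₂))).det).re := by
  intro ξ
  rw [submatrix_subtype_val_eq_fromBlocks L (· ∈ ξ), det_submatrix_equiv_self, eq_comm, and_comm, ← Complex.nonneg_iff]
  exact det_fromBlocks_nonneg (h11.submatrix _) (h22.submatrix _)
    (conjTranspose_submatrix_eq_neg h12 _ _)
end

section
/- Let C, D be matrices such that 1−DC is invertible, and let K = [[CD, C],[DCD−D, DC]]. Assume K is J-Hermitian, i.e., (CD)* = CD, (DC)* = DC, and C* = −(DCD−D) = D − DCD. Then L = K(1−K)⁻¹ equals [[0, D*],[−D, 0]]. -/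
open Matrix

/-- Let `C`, `D` be complex matrices with `1 - DC` invertible, and let
`K = [[CD, C],[DCD - D, DC]]`. If `K` is J-Hermitian, i.e. `(CD)ᴴ = CD`, `(DC)ᴴ = DC`
and `Cᴴ = -(DCD - D)`, then `1 - K` is invertible and
`L = K (1-K)⁻¹ = [[0, Dᴴ],[-D, 0]]`. -/
theorem stmt_7 {m n : Type*} [Fintype m] [DecidableEq m] [Fintype n] [DecidableEq n]
    (C : Matrix m n ℂ) (D : Matrix n m ℂ) (h : IsUnit (1 - D * C))
    (h11 : (C * D)ᴴ = C * D) (h22 : (D * C)ᴴ = D * C)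
    (h12 : Cᴴ = -(D * C * D - D)) :
    IsUnit (1 - Matrix.fromBlocks (C * D) C (D * C * D - D) (D * C)) ∧
    Matrix.fromBlocks (C * D) C (D * C * D - D) (D * C) *
        (1 - Matrix.fromBlocks (C * D) C (D * C * D - D) (D * C))⁻¹ =
      Matrix.fromBlocks 0 Dᴴ (-D) 0 := by
  have hCH : Cᴴ = D - D * C * D := by rw [h12, neg_sub]
  have f5 : D * C * D - D = -Cᴴ := by rw [hCH]; abel
  have f1 : C * (D * Dᴴ) = Dᴴ - C := by
    have : Cᴴᴴ = (D - D * C * D)ᴴ := by rw [hCH]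
    rw [conjTranspose_conjTranspose, conjTranspose_sub,
      show D * C * D = D * (C * D) from Matrix.mul_assoc D C D,
      conjTranspose_mul, h11] at this
    rw [← Matrix.mul_assoc]
    conv_rhs => rw [this]
    abel
  have f2 : Dᴴ * (D * C) = Dᴴ - C := by
    have : Cᴴᴴ = (D - D * C * D)ᴴ := by rw [hCH]
    rw [conjTranspose_conjTranspose, conjTranspose_sub, conjTranspose_mul, h22] at this
    conv_rhs => rw [this]
    abel
  have f3 : Cᴴ * Dᴴ = D * C := by rw [← conjTranspose_mul, h22]
  have f4 : Dᴴ * Cᴴ = C * D := by rw [← conjTranspose_mul, h11]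
  set K : Matrix (m ⊕ n) (m ⊕ n) ℂ := fromBlocks (C * D) C (D * C * D - D) (D * C) with hK
  set M : Matrix (m ⊕ n) (m ⊕ n) ℂ := fromBlocks 1 Dᴴ (-D) 1 with hM
  have hsub : 1 - K = fromBlocks (1 - C * D) (-C) Cᴴ (1 - D * C) := by
    rw [hK, ← fromBlocks_one, show (fromBlocks 1 0 0 1 : Matrix (m ⊕ n) (m ⊕ n) ℂ) -
        fromBlocks (C * D) C (D * C * D - D) (D * C) =
        fromBlocks 1 0 0 1 + fromBlocks (-(C * D)) (-C) (-(D * C * D - D)) (-(D * C)) from by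
      rw [← fromBlocks_neg]; abel, fromBlocks_add]
    refine fromBlocks_inj.mpr ⟨?_, ?_, ?_, ?_⟩ <;> [skip; skip; rw [neg_sub, ← hCH]; skip] <;> abel
  have hleft : (1 - K) * M = 1 := by
    rw [hsub, hM, fromBlocks_multiply, ← fromBlocks_one]
    refine fromBlocks_inj.mpr ⟨?_, ?_, ?_, ?_⟩
    · simp only [Matrix.mul_one, Matrix.one_mul, Matrix.mul_neg, Matrix.neg_mul,
        Matrix.sub_mul, Matrix.mul_sub, Matrix.mul_assoc]
      abel
    · simp only [Matrix.mul_one, Matrix.one_mul, Matrix.mul_neg, Matrix.neg_mul,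
        Matrix.sub_mul, Matrix.mul_sub, Matrix.mul_assoc, f1]
      abel
    · simp only [Matrix.mul_one, Matrix.one_mul, Matrix.mul_neg, Matrix.neg_mul,
        Matrix.sub_mul, Matrix.mul_sub, Matrix.mul_assoc, hCH]
      abel
    · simp only [Matrix.mul_one, Matrix.one_mul, f3]
      abel
  have hright : M * (1 - K) = 1 := by
    rw [hsub, hM, fromBlocks_multiply, ← fromBlocks_one]
    refine fromBlocks_inj.mpr ⟨?_, ?_, ?_, ?_⟩
    · simp only [Matrix.mul_one, Matrix.one_mul, f4]
      abel
    · simp only [Matrix.mul_one, Matrix.one_mul, Matrix.mul_neg, Matrix.neg_mul,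
        Matrix.sub_mul, Matrix.mul_sub, Matrix.mul_assoc, f2]
      abel
    · simp only [Matrix.mul_one, Matrix.one_mul, Matrix.mul_neg, Matrix.neg_mul,
        Matrix.sub_mul, Matrix.mul_sub, Matrix.mul_assoc, hCH]
      abel
    · simp only [Matrix.mul_one, Matrix.one_mul, Matrix.mul_neg, Matrix.neg_mul,
        Matrix.sub_mul, Matrix.mul_sub, Matrix.mul_assoc]
      abel
  have hu : IsUnit (1 - K) := ⟨⟨1 - K, M, hleft, hright⟩, rfl⟩
  refine ⟨hu, ?_⟩
  rw [Matrix.inv_eq_right_inv hleft, hK, hM, fromBlocks_multiply]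
  refine fromBlocks_inj.mpr ⟨?_, ?_, ?_, ?_⟩
  · simp only [Matrix.mul_one, Matrix.mul_neg, Matrix.mul_assoc]
    abel
  · simp only [Matrix.mul_one, Matrix.mul_assoc, f1]
    abel
  · simp only [Matrix.mul_one, Matrix.mul_neg, Matrix.mul_assoc]
    abel
  · rw [f5, Matrix.neg_mul, f3, Matrix.mul_one]
    abel
end

section
/- Let X be a finite set partitioned as X = X₁ ⊔ X₂, and let L be a J-Hermitian matrix on X with L₁₁ ≥ 0, L₂₂ ≥ 0, all of whose principal minors are nonnegative and with 1+L invertible; consider the probability measure Prob{ξ} = det L_ξ / det(1+L) on subsets ξ ⊆ X. Then L₁₁ = 0 and L₂₂ = 0 if and only if the measure is concentrated on configurations ξ with |ξ ∩ X₁| = |ξ ∩ X₂|. -/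
open Matrix Finset
open scoped ComplexOrder

/-!
If the diagonal blocks vanish, a nonzero principal minor `det L_ξ` has a nonvanishing term in
its Leibniz expansion, and the corresponding permutation of `ξ` must exchange `ξ ∩ X₁` and
`ξ ∩ X₂`. Conversely, if only balanced `ξ` carry weight, every one-point minor `L x x`
vanishes, and a positive semidefinite matrix with zero diagonal has zero trace, hence is zero.
-/

theorem Finset.card_filter_univ_subtype {α : Type*} (s : Finset α) (p : α → Prop)
    [DecidablePred p] : #{x : s | p x} = #(s.filter p) := by
  rw [univ_eq_attach, filter_attach, card_map, card_attach]

namespace Matrix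

theorem PosSemidef.eq_zero_of_forall_apply_self_eq_zero {n 𝕜 : Type*} [Fintype n] [RCLike 𝕜]
    {A : Matrix n n 𝕜} (hA : A.PosSemidef) (h : ∀ i, A i i = 0) : A = 0 :=
  hA.trace_eq_zero_iff.mp (by simp [trace, h])

variable {n R : Type*} [DecidableEq n] [CommRing R]

theorem det_submatrix_singleton (M : Matrix n n R) (x : n) :
    (M.submatrix (fun i : ({x} : Finset n) => (i : n))
      (fun i : ({x} : Finset n) => (i : n))).det = M x x := by
  rw [det_unique]
  rfl

theorem exists_perm_forall_apply_ne_zero_of_det_ne_zero [Fintype n] {M : Matrix n n R}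
    (h : M.det ≠ 0) : ∃ σ : Equiv.Perm n, ∀ i, M (σ i) i ≠ 0 := by
  rw [det_apply] at h
  obtain ⟨σ, -, hσ⟩ := exists_ne_zero_of_sum_ne_zero h
  refine ⟨σ, fun i hi => hσ ?_⟩
  exact smul_eq_zero_of_right _ (prod_eq_zero (mem_univ i) hi)

theorem card_filter_eq_card_filter_not_of_det_ne_zero [Fintype n] {M : Matrix n n R}
    (p : n → Prop) [DecidablePred p] (hM : ∀ i j, (p i ↔ p j) → M i j = 0)
    (h : M.det ≠ 0) :
    #{i | p i} = #{i | ¬p i} := by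
  obtain ⟨σ, hσ⟩ := exists_perm_forall_apply_ne_zero_of_det_ne_zero h
  have hswap : ∀ i, p (σ i) ↔ ¬p i := fun i => by
    have := mt (hM (σ i) i) (hσ i)
    tauto
  refine card_bij' (fun i _ => σ i) (fun i _ => σ.symm i) ?_ ?_ ?_ ?_
  · simp [hswap]
  · intro j hj
    have := hswap (σ.symm j)
    simp_all
  · simp
  · simp

theorem card_filter_eq_card_filter_not_of_det_submatrix_ne_zero {M : Matrix n n R}
    (p : n → Prop) [DecidablePred p] (hM : ∀ i j, (p i ↔ p j) → M i j = 0) (ξ : Finset n)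
    (h : (M.submatrix (fun i : ξ => (i : n)) (fun i : ξ => (i : n))).det ≠ 0) :
    #(ξ.filter p) = #(ξ.filter fun i => ¬p i) := by
  rw [← card_filter_univ_subtype ξ p, ← card_filter_univ_subtype ξ (fun i => ¬p i)]
  exact card_filter_eq_card_filter_not_of_det_ne_zero (fun i : ξ => p i)
    (fun i j hij => hM i j hij) h

theorem apply_eq_zero_of_isLeft_iff {X₁ X₂ R : Type*} [Zero R]
    {L : Matrix (X₁ ⊕ X₂) (X₁ ⊕ X₂) R}
    (h₁ : L.toBlocks₁₁ = 0) (h₂ : L.toBlocks₂₂ = 0) (i j : X₁ ⊕ X₂)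
    (hij : i.isLeft = true ↔ j.isLeft = true) : L i j = 0 := by
  rcases i with i | i <;> rcases j with j | j
  · exact congrFun (congrFun h₁ i) j
  · simp at hij
  · simp at hij
  · exact congrFun (congrFun h₂ i) j

end Matrix

theorem stmt_8_general {X₁ X₂ : Type*} [Fintype X₁] [DecidableEq X₁] [Fintype X₂] [DecidableEq X₂]
    (L : Matrix (X₁ ⊕ X₂) (X₁ ⊕ X₂) ℂ)
    (h11 : L.toBlocks₁₁.PosSemidef) (h22 : L.toBlocks₂₂.PosSemidef)
    (minor : Finset (X₁ ⊕ X₂) → ℂ)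
    (hminor : ∀ ξ, minor ξ =
      (L.submatrix (fun i : {x // x ∈ ξ} => (i : X₁ ⊕ X₂))
        (fun j : {x // x ∈ ξ} => (j : X₁ ⊕ X₂))).det)
    (hinv : IsUnit (1 + L).det) :
    (L.toBlocks₁₁ = 0 ∧ L.toBlocks₂₂ = 0) ↔
      ∀ ξ : Finset (X₁ ⊕ X₂),
        minor ξ / (1 + L).det ≠ 0 →
          (ξ.filter (fun x => x.isLeft = true)).card =
            (ξ.filter (fun x => x.isRight = true)).card := by
  constructor
  · rintro ⟨h₁, h₂⟩ ξ hξ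
    have hdet : minor ξ ≠ 0 := (div_ne_zero_iff.mp hξ).1
    rw [hminor] at hdet
    simpa using card_filter_eq_card_filter_not_of_det_submatrix_ne_zero _
      (apply_eq_zero_of_isLeft_iff h₁ h₂) ξ hdet
  · intro hcard
    have hdiag (x : X₁ ⊕ X₂) : L x x = 0 := by
      by_contra hx
      have := hcard {x} <| by
        rw [hminor, det_submatrix_singleton]
        exact div_ne_zero hx hinv.ne_zero
      cases x <;> simp [filter_singleton] at this
    exact ⟨h11.eq_zero_of_forall_apply_self_eq_zero fun i => hdiag _,
      h22.eq_zero_of_forall_apply_self_eq_zero fun i => hdiag _⟩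

/-- Let `L` be a J-Hermitian matrix on `X = X₁ ⊔ X₂` with positive semidefinite diagonal
blocks, whose principal minors are all real and nonnegative, and with `1 + L`
invertible; consider the weights `Prob{ξ} = det L_ξ / det(1+L)` on subsets `ξ`.
Then `L₁₁ = 0` and `L₂₂ = 0` if and only if the measure is concentrated on the
configurations `ξ` with `|ξ ∩ X₁| = |ξ ∩ X₂|`. -/
theorem stmt_8 {X₁ X₂ : Type*} [Fintype X₁] [DecidableEq X₁] [Fintype X₂] [DecidableEq X₂]
    (L : Matrix (X₁ ⊕ X₂) (X₁ ⊕ X₂) ℂ)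
    (h11 : L.toBlocks₁₁.PosSemidef) (h22 : L.toBlocks₂₂.PosSemidef)
    (h12 : L.toBlocks₁₂ᴴ = -L.toBlocks₂₁)
    (minor : Finset (X₁ ⊕ X₂) → ℂ)
    (hminor : ∀ ξ, minor ξ =
      (L.submatrix (fun i : {x // x ∈ ξ} => (i : X₁ ⊕ X₂))
        (fun j : {x // x ∈ ξ} => (j : X₁ ⊕ X₂))).det)
    (hreal : ∀ ξ, (minor ξ).im = 0) (hnonneg : ∀ ξ, 0 ≤ (minor ξ).re)
    (hinv : IsUnit (1 + L).det) :
    (L.toBlocks₁₁ = 0 ∧ L.toBlocks₂₂ = 0) ↔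
      ∀ ξ : Finset (X₁ ⊕ X₂),
        minor ξ / (1 + L).det ≠ 0 →
          (ξ.filter (fun x => x.isLeft = true)).card =
            (ξ.filter (fun x => x.isRight = true)).card :=
  stmt_8_general L h11 h22 minor hminor hinv
end
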